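/- Let ρ be a solution notion that is both dissectible and monotonic, and let f : Θ → X be a social choice function. Then the canonical semi-operator γ^{(ρ,f)} is increasing: for all nonempty E, E' ⊆ Θ and every θ ∈ Θ, if θ ∈ E ⊆ E' then γ^{(ρ,f)}[E,θ] ⊆ γ^{(ρ,f)}[E',θ]. -/

import Mathlib

/-!
A strict comparison `¬ ρ.R` at `(γ, E)` is, by dissectibility, witnessed by a single state
`τ̃ ∈ γ[E,θ]` together with the two-point semi-operator `{θ, τ̃}`. Monotonicity lets the witness
survive enlarging `E` to `E'`, and since `ρ` only sees the projection of the semi-operator's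
value, the two-point semi-operator may be moved from `E` to `E'`. So whenever `γ[E,θ] ⊆ γ'[E',θ]`,
every comparison `>_i` valid for `(γ, E)` is valid for `(γ', E')`; by induction on `n` this gives
`γ^{(ρ,f)-(n)}[E,θ] ⊆ γ^{(ρ,f)-(n)}[E',θ]`, and the union over `n` follows.
-/

open scoped Classical

namespace SeqMech

variable {I : Type*} {Θi : I → Type*} {X : Type*}

/-- Projection of a set of states onto agent `i`'s coordinate. -/
def proj (i : I) (E : Set (∀ j, Θi j)) : Set (Θi i) :=
  (fun θ => θ i) '' E

/-- Projection of a set of states onto the coordinates of the agents other than `i`. -/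
def projNeg (i : I) (E : Set (∀ j, Θi j)) :
    Set (∀ j : {j : I // j ≠ i}, Θi j.1) :=
  (fun θ (j : {j : I // j ≠ i}) => θ j.1) '' E

/-- The semi-operator property: nonempty sets are mapped to nonempty sets. -/
def IsSemiOp (γ : Set (∀ j, Θi j) → (∀ j, Θi j) → Set (∀ j, Θi j)) : Prop :=
  ∀ E θ, E.Nonempty → (γ E θ).Nonempty

/-- A solution notion: `R f γ E θ θ' i Fhat` means `ρ[f,(γ,E),θ,θ',i,Fhat] = 1`.  Its value
depends only on `(f, γ_i[E,θ], θ_i, θ'_i, Fhat_{-i})`. -/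
structure SolutionNotion (I : Type*) (Θi : I → Type*) (X : Type*) where
  R : ((∀ j, Θi j) → X) →
      (Set (∀ j, Θi j) → (∀ j, Θi j) → Set (∀ j, Θi j)) →
      Set (∀ j, Θi j) → (∀ j, Θi j) → (∀ j, Θi j) → I → Set (∀ j, Θi j) → Prop
  meas : ∀ f γ γ' E E' θ τ θ' τ' (i : I) Fhat Fhat',
      proj i (γ E θ) = proj i (γ' E' τ) →
      θ i = τ i → θ' i = τ' i →
      projNeg i Fhat = projNeg i Fhat' →
      (R f γ E θ θ' i Fhat ↔ R f γ' E' τ τ' i Fhat')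

/-- Dissectibility of a solution notion. -/
def Dissectible (ρ : SolutionNotion I Θi X) : Prop :=
  ∀ f γ E θ θ' (i : I) Fhat,
    IsSemiOp γ → E.Nonempty → θ ∈ E → θ' ∈ E →
    (¬ ρ.R f γ E θ θ' i Fhat ↔
      ∃ τ ∈ γ E θ, ∃ γ' : Set (∀ j, Θi j) → (∀ j, Θi j) → Set (∀ j, Θi j),
        IsSemiOp γ' ∧ γ' E θ = {θ, τ} ∧ ¬ ρ.R f γ' E θ θ' i Fhat)

/-- `θ >_i^{[(ρ,f),(γ,E)]} θ'`. -/
def gtRel (ρ : SolutionNotion I Θi X) (f : (∀ j, Θi j) → X)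
    (γ : Set (∀ j, Θi j) → (∀ j, Θi j) → Set (∀ j, Θi j))
    (E : Set (∀ j, Θi j)) (i : I) (θ θ' : ∀ j, Θi j) : Prop :=
  θ ∈ E ∧ θ' ∈ E ∧ ¬ ρ.R f γ E θ θ' i E

/-- `θ ∼_i^{[(ρ,f),(γ,E)]} θ'`. -/
def simRel (ρ : SolutionNotion I Θi X) (f : (∀ j, Θi j) → X)
    (γ : Set (∀ j, Θi j) → (∀ j, Θi j) → Set (∀ j, Θi j))
    (E : Set (∀ j, Θi j)) (i : I) (θ θ' : ∀ j, Θi j) : Prop :=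
  θ i = θ' i ∨ gtRel ρ f γ E i θ θ' ∨ gtRel ρ f γ E i θ' θ

/-- `canonN ρ f n` is the semi-operator `γ^{(ρ,f)-(n+1)}`. -/
noncomputable def canonN (ρ : SolutionNotion I Θi X) (f : (∀ j, Θi j) → X) :
    ℕ → Set (∀ j, Θi j) → (∀ j, Θi j) → Set (∀ j, Θi j)
  | 0 => fun E θ => if θ ∈ E then {θ} else E
  | n + 1 => fun E θ =>
      if θ ∈ E then
        ⋃ τ ∈ canonN ρ f n E θ,
          {θ' ∈ E | ∀ i, simRel ρ f (canonN ρ f n) E i τ θ'}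
      else E

/-- The canonical semi-operator `γ^{(ρ,f)}`. -/
noncomputable def canon (ρ : SolutionNotion I Θi X) (f : (∀ j, Θi j) → X) :
    Set (∀ j, Θi j) → (∀ j, Θi j) → Set (∀ j, Θi j) :=
  fun E θ => if θ ∈ E then ⋃ n, canonN ρ f n E θ else E

/-- Monotonicity of a solution notion. -/
def Monotonic (ρ : SolutionNotion I Θi X) : Prop :=
  ∀ f γ E θ θ' (i : I) (Fhat Ftil : Set (∀ j, Θi j)),
    IsSemiOp γ → E.Nonempty → Fhat ⊆ Ftil →
    ¬ ρ.R f γ E θ θ' i Fhat → ¬ ρ.R f γ E θ θ' i Ftil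

def pinnedOp (E : Set (∀ j, Θi j)) (θ : ∀ j, Θi j) (S : Set (∀ j, Θi j)) :
    Set (∀ j, Θi j) → (∀ j, Θi j) → Set (∀ j, Θi j) :=
  fun F s => if F = E ∧ s = θ then S else {s}

lemma pinnedOp_apply_self (E : Set (∀ j, Θi j)) (θ : ∀ j, Θi j) (S : Set (∀ j, Θi j)) :
    pinnedOp E θ S E θ = S := by
  simp [pinnedOp]

lemma isSemiOp_pinnedOp (E : Set (∀ j, Θi j)) (θ : ∀ j, Θi j) {S : Set (∀ j, Θi j)}
    (hS : S.Nonempty) : IsSemiOp (pinnedOp E θ S) := by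
  intro F s _
  by_cases h : F = E ∧ s = θ <;> simp [pinnedOp, h, hS]

section Dissection

variable {ρ : SolutionNotion I Θi X} {f : (∀ j, Θi j) → X}

lemma Dissectible.not_R_of_subset (hD : Dissectible ρ) (hM : Monotonic ρ)
    {γ γ' : Set (∀ j, Θi j) → (∀ j, Θi j) → Set (∀ j, Θi j)}
    (hγ : IsSemiOp γ) (hγ' : IsSemiOp γ') {E E' : Set (∀ j, Θi j)} (hE : E.Nonempty)
    (hEE' : E ⊆ E') {τ σ : ∀ j, Θi j} (hτ : τ ∈ E) (hσ : σ ∈ E) (i : I)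
    (hγγ' : γ E τ ⊆ γ' E' τ) (h : ¬ ρ.R f γ E τ σ i E) : ¬ ρ.R f γ' E' τ σ i E' := by
  obtain ⟨τ', hτ', γ₁, hγ₁, hγ₁E, hR₁⟩ := (hD f γ E τ σ i E hγ hE hτ hσ).1 h
  have hR₁' : ¬ ρ.R f γ₁ E τ σ i E' := hM f γ₁ E τ σ i E E' hγ₁ hE hEE' hR₁
  have hpin : pinnedOp E' τ {τ, τ'} E' τ = {τ, τ'} := pinnedOp_apply_self E' τ _
  -- `ρ` sees `γ₁` at `E` and the pinned operator at `E'` only through their common value.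
  have hR₂ : ¬ ρ.R f (pinnedOp E' τ {τ, τ'}) E' τ σ i E' := fun hR =>
    hR₁' ((ρ.meas f γ₁ _ E E' τ τ σ σ i E' E' (by rw [hγ₁E, hpin]) rfl rfl rfl).2 hR)
  refine (hD f γ' E' τ σ i E' hγ' (hE.mono hEE') (hEE' hτ) (hEE' hσ)).2
    ⟨τ', hγγ' hτ', _, isSemiOp_pinnedOp E' τ (Set.insert_nonempty τ _), hpin, hR₂⟩

lemma Dissectible.gtRel_of_subset (hD : Dissectible ρ) (hM : Monotonic ρ)
    {γ γ' : Set (∀ j, Θi j) → (∀ j, Θi j) → Set (∀ j, Θi j)}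
    (hγ : IsSemiOp γ) (hγ' : IsSemiOp γ') {E E' : Set (∀ j, Θi j)} (hE : E.Nonempty)
    (hEE' : E ⊆ E') (hγγ' : ∀ τ ∈ E, γ E τ ⊆ γ' E' τ) {i : I} {τ σ : ∀ j, Θi j}
    (h : gtRel ρ f γ E i τ σ) : gtRel ρ f γ' E' i τ σ :=
  let ⟨hτ, hσ, hR⟩ := h
  ⟨hEE' hτ, hEE' hσ, hD.not_R_of_subset hM hγ hγ' hE hEE' hτ hσ i (hγγ' τ hτ) hR⟩

lemma Dissectible.simRel_of_subset (hD : Dissectible ρ) (hM : Monotonic ρ)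
    {γ γ' : Set (∀ j, Θi j) → (∀ j, Θi j) → Set (∀ j, Θi j)}
    (hγ : IsSemiOp γ) (hγ' : IsSemiOp γ') {E E' : Set (∀ j, Θi j)} (hE : E.Nonempty)
    (hEE' : E ⊆ E') (hγγ' : ∀ τ ∈ E, γ E τ ⊆ γ' E' τ) {i : I} {τ σ : ∀ j, Θi j}
    (h : simRel ρ f γ E i τ σ) : simRel ρ f γ' E' i τ σ := by
  rcases h with h | h | h
  · exact Or.inl h
  · exact Or.inr (Or.inl (hD.gtRel_of_subset hM hγ hγ' hE hEE' hγγ' h))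
  · exact Or.inr (Or.inr (hD.gtRel_of_subset hM hγ hγ' hE hEE' hγγ' h))

end Dissection

section Canonical

variable (ρ : SolutionNotion I Θi X) (f : (∀ j, Θi j) → X)

lemma mem_canonN_self (n : ℕ) {E : Set (∀ j, Θi j)} {θ : ∀ j, Θi j} (hθ : θ ∈ E) :
    θ ∈ canonN ρ f n E θ := by
  induction n with
  | zero => simp [canonN, hθ]
  | succ n ih =>
    simp only [canonN, if_pos hθ, Set.mem_iUnion]
    exact ⟨θ, ih, hθ, fun _ => Or.inl rfl⟩

lemma isSemiOp_canonN (n : ℕ) : IsSemiOp (canonN ρ f n) := by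
  intro E θ hE
  by_cases hθ : θ ∈ E
  · exact ⟨θ, mem_canonN_self ρ f n hθ⟩
  · cases n <;> simpa [canonN, hθ] using hE

variable {ρ}

lemma canonN_mono (hD : Dissectible ρ) (hM : Monotonic ρ) {E E' : Set (∀ j, Θi j)}
    (hE : E.Nonempty) (hEE' : E ⊆ E') (n : ℕ) :
    ∀ θ ∈ E, canonN ρ f n E θ ⊆ canonN ρ f n E' θ := by
  induction n with
  | zero => intro θ hθ; simp [canonN, hθ, hEE' hθ]
  | succ n ih =>
    intro θ hθ σ hσ
    simp only [canonN, if_pos hθ, if_pos (hEE' hθ), Set.mem_iUnion] at hσ ⊢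
    obtain ⟨τ, hτ, hσE, hsim⟩ := hσ
    exact ⟨τ, ih θ hθ hτ, hEE' hσE, fun i =>
      hD.simRel_of_subset hM (isSemiOp_canonN ρ f n) (isSemiOp_canonN ρ f n) hE hEE' ih
        (hsim i)⟩

end Canonical

theorem canon_increasing_general
    (ρ : SolutionNotion I Θi X) (hD : Dissectible ρ) (hM : Monotonic ρ)
    (f : (∀ j, Θi j) → X)
    (E E' : Set (∀ j, Θi j)) (hE : E.Nonempty)
    (θ : ∀ j, Θi j) (hθ : θ ∈ E) (hEE' : E ⊆ E') :
    canon ρ f E θ ⊆ canon ρ f E' θ := by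
  simp only [canon, if_pos hθ, if_pos (hEE' hθ)]
  exact Set.iUnion_mono fun n => canonN_mono f hD hM hE hEE' n θ hθ

/-- for a dissectible and monotonic solution notion `ρ` and an SCF `f`,
the canonical semi-operator `γ^{(ρ,f)}` is increasing. -/
theorem canon_increasing
    [Fintype I] [Nonempty I] [∀ i, Fintype (Θi i)] [∀ i, Nonempty (Θi i)]
    (ρ : SolutionNotion I Θi X) (hD : Dissectible ρ) (hM : Monotonic ρ)
    (f : (∀ j, Θi j) → X)
    (E E' : Set (∀ j, Θi j)) (hE : E.Nonempty) (hE' : E'.Nonempty)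
    (θ : ∀ j, Θi j) (hθ : θ ∈ E) (hEE' : E ⊆ E') :
    canon ρ f E θ ⊆ canon ρ f E' θ :=
  canon_increasing_general ρ hD hM f E E' hE θ hθ hEE'

end SeqMech
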